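/- Let x_a(t) = e₁·exp(jφ₁(t)) + e₂·exp(jφ₂(t)) with real constants e₁ > e₂ > 0 and real phase functions φ₁, φ₂. Then any continuous phase φ(t) of x_a can be written as φ(t) = φ₁(t) + b(t) where |b(t)| ≤ arcsin(e₂/e₁) < π/2 for all t. -/

import Mathlib

open Real Complex

/-!
Factor out the stronger exponential: `x_a = e₁ exp(jφ₁) (1 + w)` with
`w = (e₂/e₁) exp(j(φ₂ - φ₁))`, so `φ₁ + arg (1 + w)` is a phase of `x_a`. Writing
`w = a + jb` and `s = ‖w‖`, one has `s² ‖1 + w‖² - b² = (a + s²)² ≥ 0`, i.e.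
`|Im (1 + w)| ≤ s ‖1 + w‖`; as `Re (1 + w) ≥ 1 - s ≥ 0`, this bounds `|arg (1 + w)|`
by `arcsin s`.
-/

namespace Complex

theorem abs_arg_le_arcsin_of_abs_im_le {z : ℂ} {r : ℝ} (hr : 0 ≤ r) (hre : 0 ≤ z.re)
    (him : |z.im| ≤ r * ‖z‖) : |arg z| ≤ arcsin r := by
  rcases eq_or_ne z 0 with rfl | hz
  · simpa using Real.arcsin_nonneg.2 hr
  have hnorm : 0 < ‖z‖ := norm_pos_iff.2 hz
  have hsin : |z.im / ‖z‖| ≤ r := by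
    rwa [abs_div, abs_norm, div_le_iff₀ hnorm]
  rw [arg_of_re_nonneg hre, abs_le]
  obtain ⟨hlo, hhi⟩ := abs_le.1 hsin
  exact ⟨by simpa only [Real.arcsin_neg] using Real.arcsin_le_arcsin hlo,
    Real.arcsin_le_arcsin hhi⟩

theorem abs_im_one_add_le_norm_mul (w : ℂ) : |(1 + w).im| ≤ ‖w‖ * ‖1 + w‖ := by
  have hsq : (1 + w).im ^ 2 ≤ (‖w‖ * ‖1 + w‖) ^ 2 := by
    have hw : ‖w‖ ^ 2 = w.re ^ 2 + w.im ^ 2 := by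
      rw [Complex.sq_norm, normSq_apply]; ring
    have h1w : ‖1 + w‖ ^ 2 = (1 + w.re) ^ 2 + w.im ^ 2 := by
      rw [Complex.sq_norm, normSq_apply]; simp only [add_re, one_re, add_im, one_im]; ring
    have hgap : (‖w‖ * ‖1 + w‖) ^ 2 - (1 + w).im ^ 2 = (w.re + ‖w‖ ^ 2) ^ 2 := by
      rw [mul_pow, h1w]; simp only [add_im, one_im, zero_add]
      linear_combination (1 - ‖w‖ ^ 2) * hw
    linarith [sq_nonneg (w.re + ‖w‖ ^ 2)]
  exact abs_le_of_sq_le_sq hsq (by positivity)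

theorem abs_arg_one_add_le_arcsin_norm {w : ℂ} (hw : ‖w‖ ≤ 1) :
    |arg (1 + w)| ≤ arcsin ‖w‖ := by
  refine abs_arg_le_arcsin_of_abs_im_le (norm_nonneg w) ?_ (abs_im_one_add_le_norm_mul w)
  simp only [add_re, one_re]
  linarith [neg_abs_le w.re, abs_re_le_norm w]

theorem norm_ofReal_mul_exp_I_mul {c : ℝ} (hc : 0 ≤ c) (θ : ℝ) :
    ‖(c : ℂ) * exp (I * θ)‖ = c := by
  rw [norm_mul, norm_real, Real.norm_of_nonneg hc, mul_comm I, norm_exp_ofReal_mul_I, mul_one]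

theorem eq_norm_mul_exp_I_mul_add_arg {z y : ℂ} {c θ : ℝ} (hc : 0 ≤ c)
    (hz : z = c * exp (I * θ) * y) :
    z = ‖z‖ * exp (I * ((θ + arg y : ℝ) : ℂ)) := by
  have hnorm : ‖z‖ = c * ‖y‖ := by
    rw [hz, norm_mul, norm_ofReal_mul_exp_I_mul hc]
  conv_lhs => rw [hz, ← norm_mul_exp_arg_mul_I y]
  rw [hnorm]
  push_cast
  rw [mul_add, exp_add]
  ring_nf

theorem mul_exp_I_mul_add_mul_exp_I_mul {e₁ : ℝ} (he₁ : e₁ ≠ 0) (e₂ φ₁ φ₂ : ℝ) :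
    e₁ * exp (I * φ₁) + e₂ * exp (I * φ₂)
      = e₁ * exp (I * φ₁)
          * (1 + ((e₂ / e₁ : ℝ) : ℂ) * exp (I * ((φ₂ - φ₁ : ℝ) : ℂ))) := by
  have hphase : exp (I * φ₂) = exp (I * φ₁) * exp (I * ((φ₂ - φ₁ : ℝ) : ℂ)) := by
    rw [← exp_add]; push_cast; ring_nf
  have hratio : ((e₂ / e₁ : ℝ) : ℂ) * e₁ = e₂ := by
    rw [ofReal_div, div_mul_cancel₀ _ (ofReal_ne_zero.2 he₁)]
  rw [hphase]
  linear_combination (-(exp (I * φ₁) * exp (I * ((φ₂ - φ₁ : ℝ) : ℂ)))) * hratio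

end Complex

/-- For `x_a t = e₁ exp(jφ₁ t) + e₂ exp(jφ₂ t)` with `e₁ > e₂ > 0`, the phase of
`x_a` can be written as `φ₁ + b` with `|b t| ≤ arcsin (e₂/e₁) < π/2` for all `t`:
the phase of the whole signal is the phase `φ₁` of the stronger exponential plus
a bounded function. -/
theorem two_exponential_phase (e₁ e₂ : ℝ) (h₂ : 0 < e₂) (h₁₂ : e₂ < e₁)
    (φ₁ φ₂ : ℝ → ℝ) :
    Real.arcsin (e₂ / e₁) < π / 2 ∧
    ∃ b : ℝ → ℝ, (∀ t, |b t| ≤ Real.arcsin (e₂ / e₁)) ∧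
      ∀ t, (e₁ : ℂ) * Complex.exp (Complex.I * (φ₁ t : ℂ))
            + (e₂ : ℂ) * Complex.exp (Complex.I * (φ₂ t : ℂ))
          = (‖(e₁ : ℂ) * Complex.exp (Complex.I * (φ₁ t : ℂ))
              + (e₂ : ℂ) * Complex.exp (Complex.I * (φ₂ t : ℂ))‖ : ℂ)
            * Complex.exp (Complex.I * ((φ₁ t + b t : ℝ) : ℂ)) := by
  have h₁ : 0 < e₁ := h₂.trans h₁₂
  have hr : e₂ / e₁ ≤ 1 := (div_le_one h₁).2 h₁₂.le
  set w : ℝ → ℂ := fun t => (e₂ / e₁ : ℝ) * exp (I * ((φ₂ t - φ₁ t : ℝ) : ℂ))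
  have hw : ∀ t, ‖w t‖ = e₂ / e₁ := fun t =>
    norm_ofReal_mul_exp_I_mul (div_pos h₂ h₁).le _
  refine ⟨Real.arcsin_lt_pi_div_two.2 ((div_lt_one h₁).2 h₁₂),
    fun t => arg (1 + w t), fun t => ?_, fun t => ?_⟩
  · simpa only [hw] using abs_arg_one_add_le_arcsin_norm ((hw t).trans_le hr)
  · exact eq_norm_mul_exp_I_mul_add_arg h₁.le (mul_exp_I_mul_add_mul_exp_I_mul h₁.ne' _ _ _)
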